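/- Let 0 < s < 1/2 and s < α < s/2 + 1/4. Define I^{(0)} = (−1,0) and, for k ≥ 1, let I^{(k)} be the right dyadic child of I^{(k−1)}. Then the function f = Σ_{k≥0} |I^{(k)}|^α h_{I^{(k)}} belongs to H^s_𝒟(ℝ) but f² does not belong to H^s_𝒟(ℝ). In particular, H^s_𝒟(ℝ) is not an algebra for 0 < s < 1/2. -/

import Mathlib

/-!
On the left half `J j = [-2^{-j}, -2^{-j-1})` of `I^{(j)}` every `h_{I^{(k)}}` is constant, so `f`
is constant there, equal to `∑_{i<j} r^i - r^j` with `r = 2^{1/2-α} ∈ (1, √2)`. Hence `f ∈ L²`,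
and by orthonormality of the Haar system its only Haar coefficients are
`(f, h_{I^{(k)}}) = 2^{-kα}`, which are square-summable against the weight `2^{2sk}` as `s < α`.

Integrating `f²` over the `J j` gives geometric series, and
`(f², h_{I^{(k)}}) = 2^{k/2} (P (r²/2)^k - Q (r/2)^k)` with `P > 0`. Since
`2^{s+1/2} r²/2 = 2^{s+1/2-2α} > 1`, the weighted coefficients `2^{2sk} (f², h_{I^{(k)}})²` tend
to infinity, so `f² ∉ H^s`.
-/

open MeasureTheory Filter
open scoped ENNReal Classical Topology

noncomputable section

/-- The standard dyadic interval `[k·2^n, (k+1)·2^n)`. -/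
def dyadic (n k : ℤ) : Set ℝ := Set.Ico ((k : ℝ) * 2 ^ n) (((k : ℝ) + 1) * 2 ^ n)

/-- The Haar function associated with `dyadic n k`:
`h_I = |I|^{-1/2} (1_{I_+} - 1_{I_-})`. -/
def haar (n k : ℤ) : ℝ → ℝ := fun x =>
  (2 : ℝ) ^ (-(n : ℝ) / 2) *
    ((dyadic (n - 1) (2 * k + 1)).indicator 1 x - (dyadic (n - 1) (2 * k)).indicator 1 x)

/-- The constant value of `haar n k` on the dyadic subinterval `dyadic m j`
(its value at the left endpoint of that subinterval). -/
def haarVal (n k m j : ℤ) : ℝ := haar n k ((j : ℝ) * 2 ^ m)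

/-- Haar coefficient `(f, h_I)`. -/
def innH (f : ℝ → ℝ) (n k : ℤ) : ℝ := ∫ x, f x * haar n k x

/-- Dyadic average `⟨f⟩_I = |I|⁻¹ ∫_I f`. -/
def avg (f : ℝ → ℝ) (n k : ℤ) : ℝ := (2 : ℝ) ^ (-n) * ∫ x in dyadic n k, f x

/-- The linear span of the Haar functions. -/
def haarSpan : Submodule ℝ (ℝ → ℝ) :=
  Submodule.span ℝ (Set.range fun p : ℤ × ℤ => haar p.1 p.2)

end

/-- Membership in the dyadic fractional Sobolev space H^s. -/
def memHs (s : ℝ) (f : ℝ → ℝ) : Prop :=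
  MemLp f 2 volume ∧
    Summable fun p : ℤ × ℤ => (2 : ℝ) ^ (-2 * s * (p.1 : ℝ)) * innH f p.1 p.2 ^ 2

/-- The counterexample in the low-regularity range: I^(k) = dyadic (-k) (-1) = [-2^{-k}, 0). -/
noncomputable def fLow (α : ℝ) : ℝ → ℝ := fun x =>
  ∑' k : ℕ, (2 : ℝ) ^ (-(k : ℝ) * α) * haar (-(k : ℤ)) (-1) x

lemma mem_dyadic_iff {n k : ℤ} {x : ℝ} : x ∈ dyadic n k ↔ ⌊x / 2 ^ n⌋ = k := by
  have h : (0 : ℝ) < 2 ^ n := zpow_pos two_pos n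
  rw [Int.floor_eq_iff, le_div_iff₀ h, div_lt_iff₀ h]
  rfl

lemma measurableSet_dyadic (n k : ℤ) : MeasurableSet (dyadic n k) := measurableSet_Ico

lemma volume_dyadic (n k : ℤ) : volume (dyadic n k) = ENNReal.ofReal (2 ^ n) := by
  rw [dyadic, Real.volume_Ico]
  ring_nf

lemma measureReal_dyadic (n k : ℤ) : volume.real (dyadic n k) = 2 ^ n := by
  rw [measureReal_def, volume_dyadic, ENNReal.toReal_ofReal (zpow_pos two_pos n).le]

lemma dyadic_disjoint {n k l : ℤ} (h : k ≠ l) : Disjoint (dyadic n k) (dyadic n l) :=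
  Set.disjoint_left.2 fun _ hk hl => h ((mem_dyadic_iff.1 hk).symm.trans (mem_dyadic_iff.1 hl))

lemma dyadic_subset_dyadic {n m : ℤ} (h : n ≤ m) (k : ℤ) :
    dyadic n k ⊆ dyadic m (k / 2 ^ (m - n).toNat) := by
  obtain ⟨d, rfl⟩ : ∃ d : ℕ, m = n + d := ⟨(m - n).toNat, by omega⟩
  intro x hx
  have hdiv : x / 2 ^ (n + d : ℤ) = x / 2 ^ n / ((2 ^ d : ℕ) : ℝ) := by
    rw [zpow_add₀ two_ne_zero, div_div]
    push_cast
    rfl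
  rw [mem_dyadic_iff, hdiv, Int.floor_div_natCast, mem_dyadic_iff.1 hx]
  simp

lemma mem_dyadic_iff_mem_child {n k : ℤ} {x : ℝ} :
    x ∈ dyadic n k ↔ x ∈ dyadic (n - 1) (2 * k) ∨ x ∈ dyadic (n - 1) (2 * k + 1) := by
  have hdiv : x / 2 ^ n = x / 2 ^ (n - 1) / ((2 : ℕ) : ℝ) := by
    rw [div_div, Nat.cast_ofNat, ← zpow_add_one₀ (two_ne_zero' ℝ), sub_add_cancel]
  simp only [mem_dyadic_iff, hdiv, Int.floor_div_natCast]
  omega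

lemma abs_haar (n k : ℤ) (x : ℝ) :
    |haar n k x| = 2 ^ (-(n : ℝ) / 2) * (dyadic n k).indicator 1 x := by
  have hR := mem_dyadic_iff_mem_child (n := n) (k := k) (x := x)
  have hRL : x ∈ dyadic (n - 1) (2 * k + 1) → x ∉ dyadic (n - 1) (2 * k) :=
    fun h => Set.disjoint_right.1 (dyadic_disjoint (by omega)) h
  rw [haar, abs_mul, abs_of_pos (Real.rpow_pos_of_pos two_pos _)]
  simp only [Set.indicator_apply, Pi.one_apply]
  split_ifs <;> simp_all

lemma haar_eq_zero_of_notMem {n k : ℤ} {x : ℝ} (hx : x ∉ dyadic n k) : haar n k x = 0 := by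
  simpa [hx] using abs_haar n k x

lemma abs_haar_le (n k : ℤ) (x : ℝ) : |haar n k x| ≤ 2 ^ (-(n : ℝ) / 2) := by
  rw [abs_haar, Set.indicator_apply]
  split_ifs <;> simp [(Real.rpow_pos_of_pos two_pos (-(n : ℝ) / 2)).le]

lemma measurable_haar (n k : ℤ) : Measurable (haar n k) :=
  measurable_const.mul ((measurable_const.indicator (measurableSet_dyadic _ _)).sub
    (measurable_const.indicator (measurableSet_dyadic _ _)))

lemma integrable_indicator_dyadic (n k : ℤ) :
    Integrable ((dyadic n k).indicator (1 : ℝ → ℝ)) :=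
  (integrable_indicator_iff (measurableSet_dyadic n k)).2
    (integrableOn_const (by rw [volume_dyadic]; exact ENNReal.ofReal_ne_top))

lemma integral_indicator_dyadic (n k : ℤ) : ∫ x, (dyadic n k).indicator (1 : ℝ → ℝ) x = 2 ^ n := by
  rw [integral_indicator_one (measurableSet_dyadic n k), measureReal_dyadic]

lemma integrable_haar (n k : ℤ) : Integrable (haar n k) :=
  ((integrable_indicator_dyadic _ _).sub (integrable_indicator_dyadic _ _)).const_mul _

lemma integral_haar (n k : ℤ) : ∫ x, haar n k x = 0 := by
  simp only [haar]
  rw [integral_const_mul, integral_sub (integrable_indicator_dyadic _ _)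
    (integrable_indicator_dyadic _ _), integral_indicator_dyadic, integral_indicator_dyadic,
    sub_self, mul_zero]

lemma integral_abs_haar (n k : ℤ) : ∫ x, |haar n k x| = 2 ^ ((n : ℝ) / 2) := by
  simp only [abs_haar]
  rw [integral_const_mul, integral_indicator_dyadic, ← Real.rpow_intCast,
    ← Real.rpow_add two_pos]
  ring_nf

lemma integral_haar_mul_self (n k : ℤ) : ∫ x, haar n k x * haar n k x = 1 := by
  have hsq : ∀ x, haar n k x * haar n k x = 2 ^ (-n) * (dyadic n k).indicator 1 x := by
    intro x
    rw [← abs_mul_abs_self, abs_haar, mul_mul_mul_comm, ← Real.rpow_add two_pos,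
      show -(n : ℝ) / 2 + -(n : ℝ) / 2 = ((-n : ℤ) : ℝ) by push_cast; ring, Real.rpow_intCast]
    simp only [Set.indicator_apply, Pi.one_apply]
    split_ifs <;> simp
  simp only [hsq]
  rw [integral_const_mul, integral_indicator_dyadic, ← zpow_add₀ two_ne_zero, neg_add_cancel,
    zpow_zero]

lemma haar_eq_of_mem_dyadic {m l q : ℤ} {x y : ℝ} (hx : x ∈ dyadic (m - 1) q)
    (hy : y ∈ dyadic (m - 1) q) : haar m l x = haar m l y := by
  simp only [haar, Set.indicator_apply, Pi.one_apply, mem_dyadic_iff.1 hx, mem_dyadic_iff.1 hy,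
    mem_dyadic_iff]

lemma integral_haar_mul_eq_zero {n k : ℤ} {g : ℝ → ℝ} {c : ℝ} (hg : ∀ x ∈ dyadic n k, g x = c) :
    ∫ x, haar n k x * g x = 0 := by
  have hgc : ∀ x, haar n k x * g x = haar n k x * c := by
    intro x
    by_cases hx : x ∈ dyadic n k
    · rw [hg x hx]
    · simp [haar_eq_zero_of_notMem hx]
  simp only [hgc]
  rw [integral_mul_const, integral_haar, zero_mul]

lemma integral_haar_mul_haar_of_lt {n k m l : ℤ} (h : n < m) :
    ∫ x, haar n k x * haar m l x = 0 := by
  set q := k / 2 ^ (m - 1 - n).toNat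
  have hsub := dyadic_subset_dyadic (show n ≤ m - 1 by omega) k
  have h0 : (q : ℝ) * 2 ^ (m - 1) ∈ dyadic (m - 1) q := by
    rw [mem_dyadic_iff, mul_div_cancel_right₀ _ (zpow_ne_zero _ two_ne_zero), Int.floor_intCast]
  exact integral_haar_mul_eq_zero fun x hx => haar_eq_of_mem_dyadic (hsub hx) h0

lemma integral_haar_mul_haar (n k m l : ℤ) :
    ∫ x, haar n k x * haar m l x = if (n, k) = (m, l) then 1 else 0 := by
  split_ifs with h
  · obtain ⟨rfl, rfl⟩ := Prod.mk.inj h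
    exact integral_haar_mul_self n k
  rcases lt_trichotomy n m with hnm | rfl | hnm
  · exact integral_haar_mul_haar_of_lt hnm
  · have hkl : k ≠ l := fun hkl => h (by rw [hkl])
    have hzero : ∀ x, haar n k x * haar n l x = 0 := by
      intro x
      by_cases hx : x ∈ dyadic n k
      · rw [haar_eq_zero_of_notMem (Set.disjoint_left.1 (dyadic_disjoint hkl) hx), mul_zero]
      · rw [haar_eq_zero_of_notMem hx, zero_mul]
    simp [hzero]
  · simp_rw [mul_comm (haar n k _)]
    exact integral_haar_mul_haar_of_lt hnm

lemma hasSum_innH_tsum_haar {a : ℕ → ℝ} (e : ℕ → ℤ × ℤ)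
    (ha : Summable fun j => |a j| * 2 ^ (((e j).1 : ℝ) / 2)) (n k : ℤ) :
    HasSum (fun j => if e j = (n, k) then a j else 0)
      (innH (fun x => ∑' j, a j * haar (e j).1 (e j).2 x) n k) := by
  set F : ℕ → ℝ → ℝ := fun j x => a j * haar (e j).1 (e j).2 x * haar n k x
  have hF_int : ∀ j, Integrable (F j) := fun j =>
    ((integrable_haar _ _).const_mul (a j)).mul_bdd (measurable_haar n k).aestronglyMeasurable
      (ae_of_all _ fun x => abs_haar_le n k x)
  have hF_norm : ∀ j, ∫ x, ‖F j x‖ ≤ |a j| * 2 ^ (((e j).1 : ℝ) / 2) * 2 ^ (-(n : ℝ) / 2) := by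
    intro j
    calc ∫ x, ‖F j x‖ ≤ ∫ x, |a j| * 2 ^ (-(n : ℝ) / 2) * |haar (e j).1 (e j).2 x| := by
          refine integral_mono (hF_int j).norm
            (((integrable_haar _ _).abs).const_mul _) fun x => ?_
          simp only [F, norm_mul, Real.norm_eq_abs]
          rw [mul_right_comm]
          gcongr
          exact abs_haar_le n k x
      _ = |a j| * 2 ^ (((e j).1 : ℝ) / 2) * 2 ^ (-(n : ℝ) / 2) := by
          rw [integral_const_mul, integral_abs_haar]
          ring
  have hsum : Summable fun j => ∫ x, ‖F j x‖ :=
    (ha.mul_right _).of_nonneg_of_le (fun j => integral_nonneg fun x => norm_nonneg _) hF_norm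
  have hcoeff : ∀ j, ∫ x, F j x = if e j = (n, k) then a j else 0 := by
    intro j
    simp only [F, mul_assoc, integral_const_mul, integral_haar_mul_haar]
    split_ifs <;> simp
  have hseries : ∫ x, ∑' j, F j x = innH (fun x => ∑' j, a j * haar (e j).1 (e j).2 x) n k := by
    simp only [innH, F, tsum_mul_right]
  simpa only [hcoeff, hseries] using hasSum_integral_of_summable_integral_norm hF_int hsum

lemma integrableOn_iUnion_of_eqOn_const {X ι : Type*} [MeasurableSpace X] [Countable ι]
    {μ : Measure X} {s : ι → Set X} {G : X → ℝ} {c : ι → ℝ} (hs : ∀ i, MeasurableSet (s i))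
    (hfin : ∀ i, μ (s i) ≠ ⊤) (hG : ∀ i, ∀ x ∈ s i, G x = c i)
    (hsum : Summable fun i => μ.real (s i) * |c i|) : IntegrableOn G (⋃ i, s i) μ := by
  have hint : ∀ i, IntegrableOn G (s i) μ := fun i =>
    (integrableOn_const (hfin i)).congr_fun (fun x hx => (hG i x hx).symm) (hs i)
  refine integrableOn_iUnion_of_summable_integral_norm hint (hsum.congr fun i => ?_)
  rw [setIntegral_congr_fun (hs i) fun x hx => by rw [hG i x hx], setIntegral_const, smul_eq_mul,
    Real.norm_eq_abs]

lemma hasSum_setIntegral_iUnion_of_eqOn_const {X ι : Type*} [MeasurableSpace X] [Countable ι]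
    {μ : Measure X} {s : ι → Set X} {G : X → ℝ} {c : ι → ℝ} (hs : ∀ i, MeasurableSet (s i))
    (hd : Pairwise (Function.onFun Disjoint s)) (hG : ∀ i, ∀ x ∈ s i, G x = c i)
    (hint : IntegrableOn G (⋃ i, s i) μ) :
    HasSum (fun i => μ.real (s i) * c i) (∫ x in ⋃ i, s i, G x ∂μ) := by
  have hpiece : ∀ i, ∫ x in s i, G x ∂μ = μ.real (s i) * c i := fun i => by
    rw [setIntegral_congr_fun (hs i) fun x hx => hG i x hx, setIntegral_const, smul_eq_mul]
  simpa only [hpiece] using hasSum_integral_iUnion hs hd hint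

lemma two_zpow_neg_natCast (k : ℕ) : (2 : ℝ) ^ (-(k : ℤ)) = 2⁻¹ ^ k := by
  rw [zpow_neg, zpow_natCast, inv_pow]

lemma hasSum_inv_two_pow_mul_pow {ρ : ℝ} (hρ : |ρ| < 2) (m : ℕ) :
    HasSum (fun j : ℕ => 2⁻¹ ^ (j + m + 1) * ρ ^ (j + m)) ((ρ / 2) ^ m / (2 - ρ)) := by
  have hq : |ρ / 2| < 1 := by
    rw [abs_div, abs_two, div_lt_one two_pos]
    exact hρ
  have h2ρ : 2 - ρ ≠ 0 := by linarith [le_abs_self ρ]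
  have hval : (ρ / 2) ^ m / (2 - ρ) = (ρ / 2) ^ m / 2 * (1 - ρ / 2)⁻¹ := by
    field_simp
  rw [hval]
  refine ((hasSum_geometric_of_abs_lt_one hq).mul_left ((ρ / 2) ^ m / 2)).congr_fun fun j => ?_
  simp only [div_pow, pow_add, pow_succ, inv_pow]
  ring

lemma tendsto_mul_pow_sub_mul_pow_atTop {P Q t u : ℝ} (hP : 0 < P) (ht : 1 < t) (hu : |u| ≤ 1) :
    Tendsto (fun k : ℕ => P * t ^ k - Q * u ^ k) atTop atTop := by
  have hbound : ∀ k : ℕ, -|Q| ≤ -(Q * u ^ k) := fun k => by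
    rw [neg_le_neg_iff]
    calc Q * u ^ k ≤ |Q * u ^ k| := le_abs_self _
      _ = |Q| * |u| ^ k := by rw [abs_mul, abs_pow]
      _ ≤ |Q| * 1 := by gcongr; exact pow_le_one₀ (abs_nonneg u) hu
      _ = |Q| := mul_one _
  simpa only [sub_eq_add_neg] using tendsto_atTop_add_right_of_le _ _
    ((tendsto_pow_atTop_atTop_of_one_lt ht).const_mul_atTop hP) hbound

namespace LowRegularity

def I (k : ℕ) : Set ℝ := dyadic (-k) (-1)

def J (j : ℕ) : Set ℝ := dyadic (-j - 1) (-2)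

lemma mem_I_iff {k : ℕ} {x : ℝ} : x ∈ I k ↔ -2⁻¹ ^ k ≤ x ∧ x < 0 := by
  simp [I, dyadic]

lemma mem_J_iff {j : ℕ} {x : ℝ} : x ∈ J j ↔ -2⁻¹ ^ j ≤ x ∧ x < -2⁻¹ ^ (j + 1) := by
  have h : (-j - 1 : ℤ) = -((j + 1 : ℕ) : ℤ) := by push_cast; ring
  simp only [J, dyadic, Set.mem_Ico, h, two_zpow_neg_natCast, pow_succ]
  constructor <;> rintro ⟨h1, h2⟩ <;> constructor <;> push_cast at * <;> linarith

lemma mem_I_of_mem_J {j k : ℕ} {x : ℝ} (hx : x ∈ J j) : x ∈ I k ↔ k ≤ j := by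
  rw [mem_J_iff] at hx
  rw [mem_I_iff]
  have hpos : (0 : ℝ) < 2⁻¹ ^ (j + 1) := by positivity
  constructor
  · rintro ⟨hk, -⟩
    by_contra! hjk
    have := pow_le_pow_of_le_one (by norm_num : (0 : ℝ) ≤ 2⁻¹) (by norm_num)
      (show j + 1 ≤ k by omega)
    linarith [hx.2]
  · intro hkj
    have := pow_le_pow_of_le_one (by norm_num : (0 : ℝ) ≤ 2⁻¹) (by norm_num) hkj
    constructor <;> linarith [hx.1, hx.2]

lemma notMem_I_succ_of_mem_J {j : ℕ} {x : ℝ} (hx : x ∈ J j) : x ∉ I (j + 1) := by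
  simp [mem_I_of_mem_J hx]

lemma measurableSet_I (k : ℕ) : MeasurableSet (I k) := measurableSet_dyadic _ _

lemma measurableSet_J (j : ℕ) : MeasurableSet (J j) := measurableSet_dyadic _ _

lemma volume_J_ne_top (j : ℕ) : volume (J j) ≠ ⊤ := by
  rw [J, volume_dyadic]
  exact ENNReal.ofReal_ne_top

lemma measureReal_J (j : ℕ) : volume.real (J j) = 2⁻¹ ^ (j + 1) := by
  rw [J, measureReal_dyadic, ← two_zpow_neg_natCast]
  push_cast
  ring_nf

lemma pairwise_disjoint_J : Pairwise (Function.onFun Disjoint J) := by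
  intro i j hij
  refine Set.disjoint_left.2 fun x hi hj => ?_
  rcases Nat.lt_or_gt_of_ne hij with h | h
  · exact notMem_I_succ_of_mem_J hi ((mem_I_of_mem_J hj).2 h)
  · exact notMem_I_succ_of_mem_J hj ((mem_I_of_mem_J hi).2 h)

lemma iUnion_J_add (m : ℕ) : ⋃ j, J (j + m) = I m := by
  ext x
  simp only [Set.mem_iUnion]
  constructor
  · rintro ⟨j, hj⟩
    exact (mem_I_of_mem_J hj).2 (Nat.le_add_left m j)
  · intro hx
    have hx' := mem_I_iff.1 hx
    have hle : (1 : ℝ) ≤ (-x)⁻¹ := by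
      rw [one_le_inv₀ (by linarith)]
      have := pow_le_one₀ (by norm_num : (0 : ℝ) ≤ 2⁻¹) (by norm_num : (2 : ℝ)⁻¹ ≤ 1) (n := m)
      linarith
    obtain ⟨j, hj1, hj2⟩ := exists_nat_pow_near hle (by norm_num : (1 : ℝ) < 2)
    have hxj : x ∈ J j := by
      rw [mem_J_iff, inv_pow, inv_pow]
      rw [le_inv_comm₀ (by positivity) (by linarith)] at hj1
      rw [inv_lt_comm₀ (by linarith) (by positivity)] at hj2
      constructor <;> linarith
    exact ⟨j - m, by rwa [Nat.sub_add_cancel ((mem_I_of_mem_J hxj).1 hx)]⟩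

lemma haar_I_eq (k : ℕ) (x : ℝ) :
    haar (-k) (-1) x = 2 ^ ((k : ℝ) / 2) * ((I (k + 1)).indicator 1 x - (J k).indicator 1 x) := by
  have hlevel : (-((k + 1 : ℕ) : ℤ)) = -k - 1 := by push_cast; ring
  simp only [haar, I, J, hlevel, Int.cast_neg, Int.cast_natCast, neg_neg]
  norm_num

lemma haar_I_apply_of_mem_J {j : ℕ} {x : ℝ} (hx : x ∈ J j) (k : ℕ) :
    haar (-k) (-1) x =
      if k < j then 2 ^ ((k : ℝ) / 2) else if k = j then -2 ^ ((k : ℝ) / 2) else 0 := by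
  have hI : x ∈ I (k + 1) ↔ k < j := mem_I_of_mem_J hx
  have hJ : x ∈ J k ↔ k = j := ⟨fun hk => by_contra fun h =>
    Set.disjoint_left.1 (pairwise_disjoint_J h) hk hx, fun h => h ▸ hx⟩
  rw [haar_I_eq]
  simp only [Set.indicator_apply, hI, hJ, Pi.one_apply]
  split_ifs <;> first | omega | ring

noncomputable def ratio (α : ℝ) : ℝ := 2 ^ (1 / 2 - α)

lemma two_rpow_mul_two_rpow_half (α : ℝ) (k : ℕ) :
    (2 : ℝ) ^ (-(k : ℝ) * α) * 2 ^ ((k : ℝ) / 2) = ratio α ^ k := by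
  rw [← Real.rpow_add two_pos, ratio, ← Real.rpow_natCast, ← Real.rpow_mul zero_le_two]
  ring_nf

lemma one_lt_ratio {α : ℝ} (hα : α < 1 / 2) : 1 < ratio α :=
  Real.one_lt_rpow one_lt_two (by linarith)

lemma ratio_sq (α : ℝ) : ratio α ^ 2 = 2 ^ (1 - 2 * α) := by
  rw [ratio, ← Real.rpow_natCast, ← Real.rpow_mul zero_le_two]
  ring_nf

lemma ratio_sq_lt_two {α : ℝ} (hα : 0 < α) : ratio α ^ 2 < 2 := by
  rw [ratio_sq]
  exact Real.rpow_lt_self_of_one_lt one_lt_two (by linarith)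

noncomputable def fLowOnJ (α : ℝ) (j : ℕ) : ℝ := ∑ i ∈ Finset.range j, ratio α ^ i - ratio α ^ j

lemma hasSum_fLow_of_mem_J (α : ℝ) {j : ℕ} {x : ℝ} (hx : x ∈ J j) :
    HasSum (fun k : ℕ => (2 : ℝ) ^ (-(k : ℝ) * α) * haar (-k) (-1) x) (fLowOnJ α j) := by
  have hsupp : ∀ k ∉ Finset.range (j + 1), (2 : ℝ) ^ (-(k : ℝ) * α) * haar (-k) (-1) x = 0 := by
    intro k hk
    rw [Finset.mem_range, not_lt] at hk
    rw [haar_I_apply_of_mem_J hx, if_neg (by omega), if_neg (by omega), mul_zero]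
  suffices hval : ∑ k ∈ Finset.range (j + 1), (2 : ℝ) ^ (-(k : ℝ) * α) * haar (-k) (-1) x =
      fLowOnJ α j by
    simpa only [hval] using hasSum_sum_of_ne_finset_zero hsupp
  rw [Finset.sum_range_succ, haar_I_apply_of_mem_J hx, if_neg (lt_irrefl j), if_pos rfl, mul_neg,
    two_rpow_mul_two_rpow_half, fLowOnJ, sub_eq_add_neg]
  congr 1
  refine Finset.sum_congr rfl fun k hk => ?_
  rw [haar_I_apply_of_mem_J hx, if_pos (Finset.mem_range.1 hk), two_rpow_mul_two_rpow_half]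

lemma I_subset_I_zero (k : ℕ) : I k ⊆ I 0 := fun x hx => by
  rw [mem_I_iff] at hx ⊢
  have := pow_le_one₀ (by norm_num : (0 : ℝ) ≤ 2⁻¹) (by norm_num : (2 : ℝ)⁻¹ ≤ 1) (n := k)
  rw [pow_zero]
  exact ⟨by linarith [hx.1], hx.2⟩

lemma hasSum_fLow_of_notMem_I (α : ℝ) {x : ℝ} (hx : x ∉ I 0) :
    HasSum (fun k : ℕ => (2 : ℝ) ^ (-(k : ℝ) * α) * haar (-k) (-1) x) 0 := by
  convert hasSum_zero with k
  rw [haar_eq_zero_of_notMem fun hk => hx (I_subset_I_zero k hk), mul_zero]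

lemma fLow_eq_of_mem_J (α : ℝ) {j : ℕ} {x : ℝ} (hx : x ∈ J j) : fLow α x = fLowOnJ α j :=
  (hasSum_fLow_of_mem_J α hx).tsum_eq

lemma fLow_eq_zero_of_notMem_I (α : ℝ) {x : ℝ} (hx : x ∉ I 0) : fLow α x = 0 :=
  (hasSum_fLow_of_notMem_I α hx).tsum_eq

lemma measurable_fLow (α : ℝ) : Measurable (fLow α) := by
  have hsum : ∀ x, Summable fun k : ℕ => (2 : ℝ) ^ (-(k : ℝ) * α) * haar (-k) (-1) x := by
    intro x
    by_cases hx : x ∈ I 0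
    · rw [← iUnion_J_add, Set.mem_iUnion] at hx
      obtain ⟨j, hj⟩ := hx
      exact (hasSum_fLow_of_mem_J α hj).summable
    · exact (hasSum_fLow_of_notMem_I α hx).summable
  refine measurable_of_tendsto_metrizable (fun n => ?_)
    (tendsto_pi_nhds.2 fun x => (hsum x).hasSum.tendsto_sum_nat)
  exact Finset.measurable_sum _ fun k _ => (measurable_haar _ _).const_mul _

variable {α : ℝ}

-- `∑_{j ≥ m} |J j| (fLowOnJ α j)²`, summed as three geometric series
noncomputable def sqIntegralI (α : ℝ) (m : ℕ) : ℝ :=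
  ((2 - ratio α) ^ 2 * (ratio α ^ 2 / 2) ^ m / (2 - ratio α ^ 2) - 2 * (ratio α / 2) ^ m + 2⁻¹ ^ m)
    / (ratio α - 1) ^ 2

lemma fLowOnJ_eq (hα : α < 1 / 2) (j : ℕ) :
    fLowOnJ α j = ((2 - ratio α) * ratio α ^ j - 1) / (ratio α - 1) := by
  have hr := one_lt_ratio hα
  have hne : ratio α - 1 ≠ 0 := by linarith
  rw [fLowOnJ, geom_sum_eq hr.ne', eq_div_iff hne, sub_mul, div_mul_cancel₀ _ hne]
  ring

lemma hasSum_measureReal_J_mul_fLowOnJ_sq (hα0 : 0 < α) (hα1 : α < 1 / 2) (m : ℕ) :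
    HasSum (fun j => volume.real (J (j + m)) * fLowOnJ α (j + m) ^ 2) (sqIntegralI α m) := by
  have hr1 : 1 < ratio α := one_lt_ratio hα1
  have hr2 : ratio α ^ 2 < 2 := ratio_sq_lt_two hα0
  simp only [measureReal_J, fLowOnJ_eq hα1, sqIntegralI]
  generalize ratio α = r at hr1 hr2 ⊢
  have hr2' : r < 2 := by nlinarith
  have h1 := hasSum_inv_two_pow_mul_pow (ρ := r ^ 2) (by rwa [abs_of_pos (by positivity)]) m
  have h2 := hasSum_inv_two_pow_mul_pow (ρ := r) (by rwa [abs_of_pos (by positivity)]) m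
  have h3 := hasSum_inv_two_pow_mul_pow (ρ := 1) (by norm_num) m
  have hsum := (((h1.mul_left ((2 - r) ^ 2)).sub (h2.mul_left (2 * (2 - r)))).add h3).div_const
    ((r - 1) ^ 2)
  have hr1' : r - 1 ≠ 0 := by linarith
  have hr2'' : 2 - r ≠ 0 := by linarith
  have hval : ((2 - r) ^ 2 * (r ^ 2 / 2) ^ m / (2 - r ^ 2) - 2 * (r / 2) ^ m + 2⁻¹ ^ m)
      / (r - 1) ^ 2 = ((2 - r) ^ 2 * ((r ^ 2 / 2) ^ m / (2 - r ^ 2))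
        - 2 * (2 - r) * ((r / 2) ^ m / (2 - r)) + (1 / 2) ^ m / (2 - 1)) / (r - 1) ^ 2 := by
    field_simp
    ring
  rw [hval]
  refine hsum.congr_fun fun j => ?_
  rw [← pow_mul, mul_comm 2 (j + m), pow_mul]
  field_simp
  ring

lemma integrableOn_I_fLow_sq (hα0 : 0 < α) (hα1 : α < 1 / 2) (m : ℕ) :
    IntegrableOn (fun x => fLow α x ^ 2) (I m) := by
  rw [← iUnion_J_add]
  refine integrableOn_iUnion_of_eqOn_const (fun j => measurableSet_J _) (fun j => volume_J_ne_top _)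
    (c := fun j => fLowOnJ α (j + m) ^ 2) (fun j x hx => by rw [fLow_eq_of_mem_J α hx]) ?_
  simpa only [abs_sq] using (hasSum_measureReal_J_mul_fLowOnJ_sq hα0 hα1 m).summable

lemma setIntegral_I_fLow_sq (hα0 : 0 < α) (hα1 : α < 1 / 2) (m : ℕ) :
    ∫ x in I m, fLow α x ^ 2 = sqIntegralI α m := by
  have hint := integrableOn_I_fLow_sq hα0 hα1 m
  rw [← iUnion_J_add] at hint ⊢
  refine (hasSum_setIntegral_iUnion_of_eqOn_const (fun j => measurableSet_J _)
    (pairwise_disjoint_J.comp_of_injective (add_left_injective m))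
    (c := fun j => fLowOnJ α (j + m) ^ 2) (fun j x hx => by rw [fLow_eq_of_mem_J α hx])
    hint).unique ?_
  exact hasSum_measureReal_J_mul_fLowOnJ_sq hα0 hα1 m

lemma memLp_fLow (hα0 : 0 < α) (hα1 : α < 1 / 2) : MemLp (fLow α) 2 := by
  rw [memLp_two_iff_integrable_sq (measurable_fLow α).aestronglyMeasurable]
  refine (integrableOn_I_fLow_sq hα0 hα1 0).integrable_of_forall_notMem_eq_zero fun x hx => ?_
  rw [fLow_eq_zero_of_notMem_I α hx, zero_pow two_ne_zero]

def chainIndex (j : ℕ) : ℤ × ℤ := (-j, -1)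

lemma chainIndex_injective : Function.Injective chainIndex := fun a b h => by
  simpa [chainIndex] using h

lemma hasSum_innH_fLow (hα : -(1 / 2) < α) (n k : ℤ) :
    HasSum (fun j => if chainIndex j = (n, k) then (2 : ℝ) ^ (-(j : ℝ) * α) else 0)
      (innH (fLow α) n k) := by
  refine hasSum_innH_tsum_haar chainIndex ?_ n k
  have hterm : ∀ j : ℕ, |(2 : ℝ) ^ (-(j : ℝ) * α)| * 2 ^ (((chainIndex j).1 : ℝ) / 2) =
      ((2 : ℝ) ^ (-(α + 1 / 2))) ^ j := by
    intro j
    rw [abs_of_pos (by positivity), ← Real.rpow_add two_pos, ← Real.rpow_natCast,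
      ← Real.rpow_mul zero_le_two]
    simp only [chainIndex, Int.cast_neg, Int.cast_natCast]
    ring_nf
  simp only [hterm]
  exact summable_geometric_of_lt_one (by positivity)
    (Real.rpow_lt_one_of_one_lt_of_neg one_lt_two (by linarith))

lemma innH_fLow_chainIndex (hα : -(1 / 2) < α) (j : ℕ) :
    innH (fLow α) (-j) (-1) = 2 ^ (-(j : ℝ) * α) := by
  have h := hasSum_innH_fLow hα (-j) (-1)
  simp only [show ∀ i, chainIndex i = (-(j : ℤ), -1) ↔ i = j from fun i =>
    chainIndex_injective.eq_iff] at h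
  exact (h.unique (hasSum_single j fun i hi => if_neg hi)).trans (if_pos rfl)

lemma innH_fLow_eq_zero (hα : -(1 / 2) < α) {n k : ℤ} (h : (n, k) ∉ Set.range chainIndex) :
    innH (fLow α) n k = 0 := by
  have h' := hasSum_innH_fLow hα n k
  simp only [show ∀ j, chainIndex j ≠ (n, k) from fun j hj => h ⟨j, hj⟩, if_false] at h'
  exact h'.unique hasSum_zero

lemma summable_weight_mul_innH_fLow_sq {s : ℝ} (hα : -(1 / 2) < α) (hsα : s < α) :
    Summable fun p : ℤ × ℤ => (2 : ℝ) ^ (-2 * s * (p.1 : ℝ)) * innH (fLow α) p.1 p.2 ^ 2 := by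
  refine (chainIndex_injective.summable_iff fun p hp => ?_).1 ?_
  · rw [innH_fLow_eq_zero hα hp, zero_pow two_ne_zero, mul_zero]
  · have hterm : ∀ j : ℕ, (2 : ℝ) ^ (-2 * s * ((chainIndex j).1 : ℝ)) *
        innH (fLow α) (chainIndex j).1 (chainIndex j).2 ^ 2 = ((2 : ℝ) ^ (2 * (s - α))) ^ j := by
      intro j
      rw [chainIndex, innH_fLow_chainIndex hα, ← Real.rpow_natCast _ 2, ← Real.rpow_mul zero_le_two,
        ← Real.rpow_add two_pos, ← Real.rpow_natCast, ← Real.rpow_mul zero_le_two]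
      push_cast
      ring_nf
    simp only [Function.comp_def, hterm]
    exact summable_geometric_of_lt_one (by positivity)
      (Real.rpow_lt_one_of_one_lt_of_neg one_lt_two (by linarith))

lemma memHs_fLow {s : ℝ} (hsα : s < α) (hα0 : 0 < α) (hα1 : α < 1 / 2) : memHs s (fLow α) :=
  ⟨memLp_fLow hα0 hα1, summable_weight_mul_innH_fLow_sq (by linarith) hsα⟩

noncomputable def leadCoeff (α : ℝ) : ℝ :=
  (2 - ratio α) ^ 2 * (ratio α + 1) / ((2 - ratio α ^ 2) * (ratio α - 1))

lemma leadCoeff_pos (hα0 : 0 < α) (hα1 : α < 1 / 2) : 0 < leadCoeff α := by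
  have hr1 := one_lt_ratio hα1
  have hr2 := ratio_sq_lt_two hα0
  have : ratio α < 2 := by nlinarith
  unfold leadCoeff
  apply div_pos <;> apply mul_pos <;> nlinarith

lemma innH_fLow_sq_chainIndex_eq_setIntegral (hα0 : 0 < α) (hα1 : α < 1 / 2) (k : ℕ) :
    innH (fun x => fLow α x ^ 2) (-k) (-1) =
      2 ^ ((k : ℝ) / 2) * ((∫ x in I (k + 1), fLow α x ^ 2) - ∫ x in J k, fLow α x ^ 2) := by
  have hI := (integrableOn_I_fLow_sq hα0 hα1 (k + 1)).integrable_indicator (measurableSet_I _)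
  have hJ := ((integrableOn_I_fLow_sq hα0 hα1 k).mono_set fun x hx =>
    (mem_I_of_mem_J hx).2 le_rfl).integrable_indicator (measurableSet_J k)
  have hpt : ∀ x, fLow α x ^ 2 * haar (-k) (-1) x = 2 ^ ((k : ℝ) / 2) *
      ((I (k + 1)).indicator (fun x => fLow α x ^ 2) x -
        (J k).indicator (fun x => fLow α x ^ 2) x) := by
    intro x
    simp only [haar_I_eq, Set.indicator_apply, Pi.one_apply]
    split_ifs <;> ring
  simp only [innH, hpt]
  rw [integral_const_mul, integral_sub hI hJ, integral_indicator (measurableSet_I _),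
    integral_indicator (measurableSet_J k)]

lemma innH_fLow_sq_chainIndex (hα0 : 0 < α) (hα1 : α < 1 / 2) (k : ℕ) :
    innH (fun x => fLow α x ^ 2) (-k) (-1) = 2 ^ ((k : ℝ) / 2) *
      (leadCoeff α * (ratio α ^ 2 / 2) ^ k - 2 / (ratio α - 1) * (ratio α / 2) ^ k) := by
  have hJ : ∫ x in J k, fLow α x ^ 2 = 2⁻¹ ^ (k + 1) * fLowOnJ α k ^ 2 := by
    rw [setIntegral_congr_fun (measurableSet_J k) fun x hx => by rw [fLow_eq_of_mem_J α hx],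
      setIntegral_const, measureReal_J, smul_eq_mul]
  rw [innH_fLow_sq_chainIndex_eq_setIntegral hα0 hα1, setIntegral_I_fLow_sq hα0 hα1, hJ,
    sqIntegralI, fLowOnJ_eq hα1, leadCoeff]
  have hr1 := one_lt_ratio hα1
  have hr2 := ratio_sq_lt_two hα0
  generalize ratio α = r at hr1 hr2 ⊢
  have h1 : r - 1 ≠ 0 := by linarith
  have h2 : 2 - r ^ 2 ≠ 0 := by linarith
  congr 1
  simp only [div_pow, mul_pow, pow_succ, inv_pow, ← pow_mul]
  field_simp
  ring

lemma not_memHs_fLow_sq {s : ℝ} (hα0 : 0 < α) (hsα : s ≤ α) (hαs : α < s / 2 + 1 / 4) :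
    ¬ memHs s (fun x => fLow α x ^ 2) := by
  rintro ⟨-, hsum⟩
  have hα1 : α < 1 / 2 := by linarith
  set σ : ℝ := 2 ^ (s + 1 / 2)
  -- `σ r² / 2 = 2 ^ (s + 1/2 - 2α)`: this is where `α < s/2 + 1/4` enters
  have hgrow : 1 < σ * (ratio α ^ 2 / 2) := by
    rw [ratio_sq, mul_div_assoc', ← Real.rpow_add two_pos, ← Real.rpow_sub_one two_ne_zero]
    exact Real.one_lt_rpow one_lt_two (by linarith)
  have hdecay : |σ * (ratio α / 2)| ≤ 1 := by
    rw [ratio, mul_div_assoc', ← Real.rpow_add two_pos, ← Real.rpow_sub_one two_ne_zero,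
      abs_of_pos (by positivity)]
    exact Real.rpow_le_one_of_one_le_of_nonpos one_le_two (by linarith)
  have hterm : ∀ k : ℕ, (2 : ℝ) ^ (-2 * s * ((chainIndex k).1 : ℝ)) *
      innH (fun x => fLow α x ^ 2) (chainIndex k).1 (chainIndex k).2 ^ 2 =
      (leadCoeff α * (σ * (ratio α ^ 2 / 2)) ^ k -
        2 / (ratio α - 1) * (σ * (ratio α / 2)) ^ k) ^ 2 := by
    intro k
    have hweight :
        (2 : ℝ) ^ (-2 * s * ((-(k : ℤ) : ℤ) : ℝ)) * (2 ^ ((k : ℝ) / 2)) ^ 2 = (σ ^ k) ^ 2 := by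
      rw [← Real.rpow_natCast, ← Real.rpow_natCast σ, ← Real.rpow_mul zero_le_two,
        ← Real.rpow_mul zero_le_two, ← Real.rpow_add two_pos, ← Real.rpow_natCast,
        ← Real.rpow_mul zero_le_two]
      push_cast
      ring_nf
    rw [chainIndex, innH_fLow_sq_chainIndex hα0 hα1, mul_pow, ← mul_assoc, hweight, ← mul_pow]
    ring
  have hzero := (hsum.comp_injective chainIndex_injective).tendsto_atTop_zero
  simp only [Function.comp_def, hterm] at hzero
  exact not_tendsto_nhds_of_tendsto_atTop ((tendsto_pow_atTop two_ne_zero).comp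
    (tendsto_mul_pow_sub_mul_pow_atTop (leadCoeff_pos hα0 hα1) hgrow hdecay)) 0 hzero

end LowRegularity

theorem not_algebra_low_general (s α : ℝ) (hs0 : 0 < s) (h1 : s < α)
    (h2 : α < s / 2 + 1 / 4) :
    memHs s (fLow α) ∧ ¬ memHs s (fun x => fLow α x ^ 2) := by
  have hα0 : 0 < α := hs0.trans h1
  exact ⟨LowRegularity.memHs_fLow h1 hα0 (by linarith),
    LowRegularity.not_memHs_fLow_sq hα0 h1.le h2⟩

theorem not_algebra_low (s α : ℝ) (hs0 : 0 < s) (hs1 : s < 1 / 2) (h1 : s < α)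
    (h2 : α < s / 2 + 1 / 4) :
    memHs s (fLow α) ∧ ¬ memHs s (fun x => fLow α x ^ 2) :=
  not_algebra_low_general s α hs0 h1 h2
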